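/- arXiv:0806.3012 — 2 statements merged into one kernel-verified Lean document; each statement's English description precedes it below -/
import Mathlib

section
/- For any 0 < ε < 1, the fourth moments of the autoregressive observations are uniformly bounded: for every n ≥ 1, every 0 ≤ k ≤ n, every S ∈ Γ_ε and every p ∈ 𝒫, E_{S,p} y_k⁴ ≤ 8 |y_0|⁴ + 8 σ*/ε⁴. In particular m* := sup_{n≥1} sup_{0≤k≤n} sup_{S∈Γ_ε} sup_{p∈𝒫} E_{S,p} y_k⁴ < ∞. -/
open MeasureTheory Filter Set ENNReal NNReal

noncomputable section

/-- The class `𝒫` of noise densities: probability densities on `ℝ` with mean `0`,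
variance `1` and fourth absolute moment bounded by `σstar`. -/
def IsNoiseDensity (σstar : ℝ) (p : ℝ → ℝ) : Prop :=
  (∀ x, 0 ≤ p x) ∧ Integrable p ∧ (∫ x, p x) = 1 ∧
  Integrable (fun x => x * p x) ∧ (∫ x, x * p x) = 0 ∧
  Integrable (fun x => x ^ 2 * p x) ∧ (∫ x, x ^ 2 * p x) = 1 ∧
  Integrable (fun x => |x| ^ 4 * p x) ∧ (∫ x, |x| ^ 4 * p x) ≤ σstar

/-- Law of a single noise variable with density `p`. -/
def noiseMeasure (p : ℝ → ℝ) : Measure ℝ := volume.withDensity fun x => ENNReal.ofReal (p x)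

/-- Joint law of the noise vector `(ξ₁, …, ξ_n)` (i.i.d. with density `p`). -/
def noisePi (n : ℕ) (p : ℝ → ℝ) : Measure (Fin n → ℝ) := Measure.pi fun _ => noiseMeasure p

/-- The autoregressive trajectory: `y 0 = y0`, `y (k+1) = S ((k+1)/n) * y k + ξ (k+1)`. -/
def traj (n : ℕ) (S : ℝ → ℝ) (y0 : ℝ) (ξ : Fin n → ℝ) : ℕ → ℝ
  | 0 => y0
  | k + 1 => S (((k : ℝ) + 1) / n) * traj n S y0 ξ k + if hk : k < n then ξ ⟨k, hk⟩ else 0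

/-- The bandwidth `h = n ^ (-1/(2β+1))`. -/
def bw (β : ℝ) (n : ℕ) : ℝ := (n : ℝ) ^ (-(1 / (2 * β + 1)))

/-- The normalising rate `φ_n = n ^ (β/(2β+1))`. -/
def rate (β : ℝ) (n : ℕ) : ℝ := (n : ℝ) ^ (β / (2 * β + 1))

/-- `u_k = (x_k - z0)/h` with `x_k = k/n`. -/
def uu (β z0 : ℝ) (n k : ℕ) : ℝ := ((k : ℝ) / n - z0) / bw β n

/-- The stability set `Γ_ε`. -/
def stabSet (ε : ℝ) : Set (ℝ → ℝ) :=
  {S | ContDiff ℝ 1 S ∧ ∀ x ∈ Icc (0 : ℝ) 1, |S x| ≤ 1 - ε}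

/-- The set `Θ_{K,ε}`. -/
def thetaSet (K ε : ℝ) : Set (ℝ → ℝ) :=
  {S | S ∈ stabSet ε ∧ ∀ x ∈ Icc (0 : ℝ) 1, |deriv S x| ≤ K}

/-- The stable local Hölder class `H^β(z0, K, ε)` with `β = 1 + α`. -/
def holderClass (z0 K ε α : ℝ) : Set (ℝ → ℝ) :=
  {S | S ∈ stabSet ε ∧ (∀ x ∈ Icc (0 : ℝ) 1, |deriv S x| ≤ K) ∧
      ∀ x ∈ Icc (0 : ℝ) 1, |deriv S x - deriv S z0| ≤ K * |x - z0| ^ α}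

/-- The weak stable local Hölder class `U^β_{δ,n}(z0, ε)`. -/
def weakClass (z0 ε β δ : ℝ) (n : ℕ) : Set (ℝ → ℝ) :=
  {S | S ∈ stabSet ε ∧ (∀ x ∈ Icc (0 : ℝ) 1, |deriv S x| ≤ δ⁻¹) ∧
      |∫ u in (-1 : ℝ)..1, (S (z0 + u * bw β n) - S z0)| ≤ δ * bw β n ^ β}

/-- The observation vector `(y_1, …, y_n)`. -/
def obs (n : ℕ) (S : ℝ → ℝ) (y0 : ℝ) (ξ : Fin n → ℝ) : Fin n → ℝ :=
  fun i => traj n S y0 ξ ((i : ℕ) + 1)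

/-- The risk `R_n(S̃, S) = sup_{p ∈ 𝒫} E_{S,p} |S̃(y_1,…,y_n) - S z0|`. -/
def risk (σstar : ℝ) (n : ℕ) (y0 z0 : ℝ) (est : (Fin n → ℝ) → ℝ) (S : ℝ → ℝ) : ℝ≥0∞ :=
  ⨆ p ∈ {p : ℝ → ℝ | IsNoiseDensity σstar p},
    ∫⁻ ξ, ENNReal.ofReal |est (obs n S y0 ξ) - S z0| ∂noisePi n p

/-- The kernel estimator `Ŝ_n(z0)` built from the trajectory `y`. -/
def kernelEst (n : ℕ) (β z0 : ℝ) (Q : ℝ → ℝ) (d : ℝ) (y : ℕ → ℝ) : ℝ :=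
  if d ≤ ∑ i ∈ Finset.range n, Q (uu β z0 n (i + 1)) * y i ^ 2 then
    (∑ i ∈ Finset.range n, Q (uu β z0 n (i + 1)) * y i * y (i + 1)) /
      (∑ i ∈ Finset.range n, Q (uu β z0 n (i + 1)) * y i ^ 2)
  else 0

/-! Minkowski's inequality in `L⁴` turns the recursion `y (k+1) = S (x_{k+1}) y k + ξ (k+1)` into
`‖y (k+1)‖₄ ≤ (1 - ε) ‖y k‖₄ + σ*^{1/4}`, and `|y 0| + σ*^{1/4} / ε` is a bound that this
recursion preserves. Raising it to the fourth power with `(a + b)⁴ ≤ 8 (a⁴ + b⁴)` gives the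
claim, uniformly in `n`, `k`, `S` and `p`. -/

lemma measurable_traj (n : ℕ) (S : ℝ → ℝ) (y0 : ℝ) (k : ℕ) :
    Measurable fun ξ : Fin n → ℝ => traj n S y0 ξ k := by
  induction k with
  | zero => exact measurable_const
  | succ k ih =>
    refine (measurable_const.mul ih).add ?_
    by_cases hk : k < n
    · simpa only [dif_pos hk] using measurable_pi_apply _
    · simpa only [dif_neg hk] using measurable_const

lemma traj_succ_of_lt {n k : ℕ} (hk : k < n) (S : ℝ → ℝ) (y0 : ℝ) :
    (fun ξ : Fin n → ℝ => traj n S y0 ξ (k + 1)) =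
      S (((k : ℝ) + 1) / n) • (fun ξ => traj n S y0 ξ k) + fun ξ => ξ ⟨k, hk⟩ := by
  funext ξ
  simp [traj, dif_pos hk]

lemma lintegral_ofReal_pow_four {α : Type*} [MeasurableSpace α] (μ : Measure α) (f : α → ℝ) :
    ∫⁻ x, ENNReal.ofReal (f x ^ 4) ∂μ = eLpNorm f 4 μ ^ 4 := by
  have h := eLpNorm_nnreal_pow_eq_lintegral (μ := μ) (f := f) (p := 4) (by norm_num)
  push_cast [ENNReal.rpow_ofNat] at h
  refine h ▸ lintegral_congr fun x => ?_
  rw [Real.enorm_eq_ofReal_abs, ← ENNReal.ofReal_pow (abs_nonneg _), Even.pow_abs (by decide)]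

namespace IsNoiseDensity

variable {σstar : ℝ} {p : ℝ → ℝ}

lemma isProbabilityMeasure (hp : IsNoiseDensity σstar p) :
    IsProbabilityMeasure (noiseMeasure p) := by
  obtain ⟨hp0, hpInt, hpI1, -⟩ := hp
  constructor
  rw [noiseMeasure, withDensity_apply _ MeasurableSet.univ, Measure.restrict_univ,
    ← ofReal_integral_eq_lintegral_ofReal hpInt (ae_of_all _ hp0), hpI1, ENNReal.ofReal_one]

lemma nonneg (hp : IsNoiseDensity σstar p) : 0 ≤ σstar :=
  (integral_nonneg fun x => mul_nonneg (by positivity) (hp.1 x)).trans hp.2.2.2.2.2.2.2.2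

lemma lintegral_pow_four_le (hp : IsNoiseDensity σstar p) :
    ∫⁻ x, ENNReal.ofReal (x ^ 4) ∂noiseMeasure p ≤ ENNReal.ofReal σstar := by
  obtain ⟨hp0, hpInt, -, -, -, -, -, hp4Int, hp4⟩ := hp
  rw [noiseMeasure, lintegral_withDensity_eq_lintegral_mul₀' hpInt.aemeasurable.ennreal_ofReal
    (by fun_prop)]
  have hpt : ∀ x : ℝ, ENNReal.ofReal (p x) * ENNReal.ofReal (x ^ 4)
      = ENNReal.ofReal (|x| ^ 4 * p x) := fun x => by
    rw [← ENNReal.ofReal_mul (hp0 x), Even.pow_abs (by decide : Even 4), mul_comm]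
  simp only [Pi.mul_apply, hpt]
  rw [← ofReal_integral_eq_lintegral_ofReal hp4Int
    (ae_of_all _ fun x => mul_nonneg (by positivity) (hp0 x))]
  exact ENNReal.ofReal_le_ofReal hp4

lemma eLpNorm_id_le (hp : IsNoiseDensity σstar p) {b : ℝ} (hb : 0 ≤ b) (hσb : σstar ≤ b ^ 4) :
    eLpNorm id 4 (noiseMeasure p) ≤ ENNReal.ofReal b := by
  rw [← ENNReal.pow_le_pow_left_iff (n := 4) (by norm_num), ← lintegral_ofReal_pow_four,
    ← ENNReal.ofReal_pow hb]
  exact hp.lintegral_pow_four_le.trans (ENNReal.ofReal_le_ofReal hσb)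

end IsNoiseDensity

lemma eLpNorm_traj_le {μ : Measure ℝ} [IsProbabilityMeasure μ] {q : ℝ≥0∞} (hq : 1 ≤ q)
    {b ε : ℝ} (hb : 0 ≤ b) (hε : 0 < ε) (hμ : eLpNorm id q μ ≤ ENNReal.ofReal b)
    {S : ℝ → ℝ} (hS : S ∈ stabSet ε) (y0 : ℝ) {n k : ℕ} (hk : k ≤ n) :
    eLpNorm (fun ξ => traj n S y0 ξ k) q (Measure.pi fun _ : Fin n => μ) ≤
      ENNReal.ofReal (|y0| + b / ε) := by
  have hM : 0 ≤ |y0| + b / ε := by positivity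
  induction k with
  | zero =>
    rw [show (fun ξ : Fin n → ℝ => traj n S y0 ξ 0) = fun _ => y0 from rfl,
      eLpNorm_const _ (by positivity) (IsProbabilityMeasure.ne_zero _)]
    simp only [measure_univ, ENNReal.one_rpow, mul_one, Real.enorm_eq_ofReal_abs]
    exact ENNReal.ofReal_le_ofReal (le_add_of_nonneg_right (by positivity))
  | succ k ih =>
    have hkn : k < n := hk
    set c := S (((k : ℝ) + 1) / n)
    have hc : |c| ≤ 1 - ε := hS.2 _ ⟨by positivity, by
      rw [div_le_one (Nat.cast_pos.mpr (Nat.zero_lt_of_lt hkn))]; exact_mod_cast hkn⟩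
    have hξ : eLpNorm (fun ξ : Fin n → ℝ => ξ ⟨k, hkn⟩) q (Measure.pi fun _ => μ) ≤
        ENNReal.ofReal b :=
      (eLpNorm_comp_measurePreserving aestronglyMeasurable_id
        (measurePreserving_eval _ _)).trans_le hμ
    rw [traj_succ_of_lt hkn]
    calc _ ≤ eLpNorm (c • fun ξ => traj n S y0 ξ k) q (Measure.pi fun _ => μ) +
          eLpNorm (fun ξ : Fin n → ℝ => ξ ⟨k, hkn⟩) q (Measure.pi fun _ => μ) :=
          eLpNorm_add_le (((measurable_traj n S y0 k).const_smul c).aestronglyMeasurable)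
            (measurable_pi_apply _).aestronglyMeasurable hq
      _ ≤ ENNReal.ofReal |c| * ENNReal.ofReal (|y0| + b / ε) + ENNReal.ofReal b := by
          rw [eLpNorm_const_smul, Real.enorm_eq_ofReal_abs]
          gcongr
          exact ih (by omega)
      _ ≤ ENNReal.ofReal (|y0| + b / ε) := by
          rw [← ENNReal.ofReal_mul (abs_nonneg c), ← ENNReal.ofReal_add (by positivity) hb]
          refine ENNReal.ofReal_le_ofReal ?_
          have hcontract : (1 - ε) * (b / ε) + b = b / ε := by field_simp; ring
          nlinarith [abs_nonneg y0, mul_le_mul_of_nonneg_right hc hM]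

lemma lintegral_traj_pow_four_le {σstar ε : ℝ} (hε : 0 < ε) {S : ℝ → ℝ} (hS : S ∈ stabSet ε)
    {p : ℝ → ℝ} (hp : IsNoiseDensity σstar p) (y0 : ℝ) {n k : ℕ} (hk : k ≤ n) :
    ∫⁻ ξ, ENNReal.ofReal (traj n S y0 ξ k ^ 4) ∂noisePi n p ≤
      ENNReal.ofReal (8 * |y0| ^ 4 + 8 * σstar / ε ^ 4) := by
  have := hp.isProbabilityMeasure
  set b := σstar ^ (4⁻¹ : ℝ)
  have hb : 0 ≤ b := Real.rpow_nonneg hp.nonneg _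
  have hb4 : b ^ 4 = σstar := by
    simpa using Real.rpow_inv_natCast_pow hp.nonneg (n := 4) (by norm_num)
  have hpow : (|y0| + b / ε) ^ 4 ≤ 8 * |y0| ^ 4 + 8 * σstar / ε ^ 4 := by
    have h := add_pow_le (abs_nonneg y0) (div_nonneg hb hε.le) 4
    rw [div_pow, hb4] at h
    norm_num at h
    exact h.trans_eq (by ring)
  calc _ = eLpNorm (fun ξ => traj n S y0 ξ k) 4 (noisePi n p) ^ 4 :=
        lintegral_ofReal_pow_four _ _
    _ ≤ ENNReal.ofReal (|y0| + b / ε) ^ 4 := by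
        gcongr
        exact eLpNorm_traj_le (by norm_num) hb hε (hp.eLpNorm_id_le hb hb4.ge) hS y0 hk
    _ = ENNReal.ofReal ((|y0| + b / ε) ^ 4) := (ENNReal.ofReal_pow (by positivity) 4).symm
    _ ≤ _ := ENNReal.ofReal_le_ofReal hpow

theorem statement4_general
    (σstar : ℝ) (y0 : ℝ) (ε : ℝ) (hε0 : 0 < ε) :
    (∀ n : ℕ, 1 ≤ n → ∀ k ≤ n, ∀ S ∈ stabSet ε, ∀ p : ℝ → ℝ, IsNoiseDensity σstar p →
        ∫⁻ ξ, ENNReal.ofReal (traj n S y0 ξ k ^ 4) ∂noisePi n p ≤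
          ENNReal.ofReal (8 * |y0| ^ 4 + 8 * σstar / ε ^ 4)) ∧
      (⨆ n ∈ {n : ℕ | 1 ≤ n}, ⨆ k ∈ {k : ℕ | k ≤ n}, ⨆ S ∈ stabSet ε,
          ⨆ p ∈ {p : ℝ → ℝ | IsNoiseDensity σstar p},
            ∫⁻ ξ, ENNReal.ofReal (traj n S y0 ξ k ^ 4) ∂noisePi n p) < ⊤ := by
  have bound := fun (n : ℕ) (_ : 1 ≤ n) k (hk : k ≤ n) S (hS : S ∈ stabSet ε) p
    (hp : IsNoiseDensity σstar p) => lintegral_traj_pow_four_le hε0 hS hp y0 hk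
  refine ⟨bound, (iSup₂_le fun n hn => iSup₂_le fun k hk => iSup₂_le fun S hS =>
    iSup₂_le fun p hp => bound n hn k hk S hS p hp).trans_lt ENNReal.ofReal_lt_top⟩

/-- Lemma A.1: uniform bound on the fourth moments of the autoregressive observations;
in particular `m* < ∞`. -/
theorem statement4
    (σstar : ℝ) (hσ : 3 ≤ σstar) (y0 : ℝ) (ε : ℝ) (hε0 : 0 < ε) (hε1 : ε < 1) :
    (∀ n : ℕ, 1 ≤ n → ∀ k ≤ n, ∀ S ∈ stabSet ε, ∀ p : ℝ → ℝ, IsNoiseDensity σstar p →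
        ∫⁻ ξ, ENNReal.ofReal (traj n S y0 ξ k ^ 4) ∂noisePi n p ≤
          ENNReal.ofReal (8 * |y0| ^ 4 + 8 * σstar / ε ^ 4)) ∧
      (⨆ n ∈ {n : ℕ | 1 ≤ n}, ⨆ k ∈ {k : ℕ | k ≤ n}, ⨆ S ∈ stabSet ε,
          ⨆ p ∈ {p : ℝ → ℝ | IsNoiseDensity σstar p},
            ∫⁻ ξ, ENNReal.ofReal (traj n S y0 ξ k ^ 4) ∂noisePi n p) < ⊤ :=
  statement4_general σstar y0 ε hε0

end
end

section
/- Let 0 < ε < 1, let s_1,…,s_n and ξ_1,…,ξ_n be real numbers with |s_k| ≤ 1 − ε for all k, let y_0 ∈ ℝ, and define y_k = s_k y_{k−1} + ξ_k for 1 ≤ k ≤ n. Then for every 1 ≤ k ≤ n, y_k⁴ ≤ 8 y_0⁴ + (8/ε³) Σ_{j=1}^k (1−ε)^{k−j} ξ_j⁴. -/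
/-!
One step of the recursion contracts fourth powers up to a noise term: since
`|s a + b| ≤ (1 - ε) |a| + ε (|b| / ε)`, convexity of `x ↦ x⁴` (Hölder with exponents `4/3`
and `4`) gives `(s a + b)⁴ ≤ (1 - ε) a⁴ + b⁴ / ε³`. Iterating yields
`y_k⁴ ≤ (1 - ε)^k y_0⁴ + ε⁻³ ∑_{j ≤ k} (1 - ε)^(k - j) ξ_j⁴`, stronger than the claim.
-/

open MeasureTheory Filter Set ENNReal NNReal

noncomputable section

theorem sum_Icc_pow_sub_mul_succ {R : Type*} [CommSemiring R] (r : R) (f : ℕ → R) (k : ℕ) :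
    ∑ j ∈ Finset.Icc 1 (k + 1), r ^ (k + 1 - j) * f j =
      r * ∑ j ∈ Finset.Icc 1 k, r ^ (k - j) * f j + f (k + 1) := by
  rw [Finset.sum_Icc_succ_top (Nat.le_add_left 1 k), Finset.mul_sum, Nat.sub_self, pow_zero,
    one_mul]
  congr 1
  refine Finset.sum_congr rfl fun j hj => ?_
  rw [show k + 1 - j = k - j + 1 by grind, pow_succ]
  ring

theorem abs_mul_add_pow_le {ε s : ℝ} (hε : 0 < ε) (hs : |s| ≤ 1 - ε) (a b : ℝ) (m : ℕ) :
    |s * a + b| ^ (m + 1) ≤ (1 - ε) * |a| ^ (m + 1) + |b| ^ (m + 1) / ε ^ m := by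
  have hε1 : 0 ≤ 1 - ε := (abs_nonneg s).trans hs
  have hjensen := (convexOn_pow (m + 1)).2 (mem_Ici.2 (abs_nonneg a))
    (mem_Ici.2 (div_nonneg (abs_nonneg b) hε.le)) hε1 hε.le (by ring)
  simp only [smul_eq_mul] at hjensen
  have htriangle : |s * a + b| ≤ (1 - ε) * |a| + ε * (|b| / ε) := by
    rw [mul_div_cancel₀ _ hε.ne']
    calc |s * a + b| ≤ |s| * |a| + |b| := (abs_add_le _ _).trans_eq (by rw [abs_mul])
      _ ≤ (1 - ε) * |a| + |b| := by gcongr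
  calc |s * a + b| ^ (m + 1) ≤ ((1 - ε) * |a| + ε * (|b| / ε)) ^ (m + 1) := by gcongr
    _ ≤ (1 - ε) * |a| ^ (m + 1) + ε * (|b| / ε) ^ (m + 1) := hjensen
    _ = (1 - ε) * |a| ^ (m + 1) + |b| ^ (m + 1) / ε ^ m := by
      rw [div_pow, pow_succ' ε, ← mul_div_assoc, mul_div_mul_left _ _ hε.ne']

theorem abs_pow_le_of_contracting_recursion {n m : ℕ} {ε : ℝ} (hε : 0 < ε) {s ξ y : ℕ → ℝ}
    (hs : ∀ k, 1 ≤ k → k ≤ n → |s k| ≤ 1 - ε)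
    (hy : ∀ k < n, y (k + 1) = s (k + 1) * y k + ξ (k + 1)) {k : ℕ} (hk : k ≤ n) :
    |y k| ^ (m + 1) ≤ (1 - ε) ^ k * |y 0| ^ (m + 1) +
      (∑ j ∈ Finset.Icc 1 k, (1 - ε) ^ (k - j) * |ξ j| ^ (m + 1)) / ε ^ m := by
  induction k with
  | zero => simp
  | succ k ih =>
    have hε1 : 0 ≤ 1 - ε := (abs_nonneg _).trans (hs (k + 1) (Nat.le_add_left 1 k) hk)
    rw [hy k hk, sum_Icc_pow_sub_mul_succ]
    calc |s (k + 1) * y k + ξ (k + 1)| ^ (m + 1)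
        ≤ (1 - ε) * |y k| ^ (m + 1) + |ξ (k + 1)| ^ (m + 1) / ε ^ m :=
          abs_mul_add_pow_le hε (hs (k + 1) (Nat.le_add_left 1 k) hk) _ _ m
      _ ≤ (1 - ε) * ((1 - ε) ^ k * |y 0| ^ (m + 1) +
            (∑ j ∈ Finset.Icc 1 k, (1 - ε) ^ (k - j) * |ξ j| ^ (m + 1)) / ε ^ m) +
            |ξ (k + 1)| ^ (m + 1) / ε ^ m := by gcongr; exact ih (by omega)
      _ = _ := by ring

theorem statement8_general (n : ℕ) (ε : ℝ) (hε0 : 0 < ε)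
    (s ξ : ℕ → ℝ) (hs : ∀ k : ℕ, 1 ≤ k → k ≤ n → |s k| ≤ 1 - ε)
    (y : ℕ → ℝ) (hy : ∀ k < n, y (k + 1) = s (k + 1) * y k + ξ (k + 1)) :
    ∀ k : ℕ, 1 ≤ k → k ≤ n →
      y k ^ 4 ≤ 8 * y 0 ^ 4 +
        8 / ε ^ 3 * ∑ j ∈ Finset.Icc 1 k, (1 - ε) ^ (k - j) * ξ j ^ 4 := by
  intro k hk1 hkn
  have hε1 : 0 ≤ 1 - ε := (abs_nonneg _).trans (hs k hk1 hkn)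
  have hbound := abs_pow_le_of_contracting_recursion (m := 3) hε0 hs hy hkn
  simp only [show 3 + 1 = 4 from rfl, (show Even 4 by decide).pow_abs] at hbound
  have hsum : 0 ≤ ∑ j ∈ Finset.Icc 1 k, (1 - ε) ^ (k - j) * ξ j ^ 4 :=
    Finset.sum_nonneg fun j _ => by positivity
  have hdecay : (1 - ε) ^ k ≤ 1 := pow_le_one₀ hε1 (by linarith)
  calc y k ^ 4 ≤ 1 * y 0 ^ 4 + 1 / ε ^ 3 * ∑ j ∈ Finset.Icc 1 k, (1 - ε) ^ (k - j) * ξ j ^ 4 := by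
        rw [one_div_mul_eq_div]; exact hbound.trans (by gcongr)
    _ ≤ _ := by gcongr <;> norm_num

/-- A deterministic fourth-power bound for linear recursions with contraction
coefficients: `y_k⁴ ≤ 8 y_0⁴ + (8/ε³) Σ_{j=1}^k (1-ε)^{k-j} ξ_j⁴`. -/
theorem statement8 (n : ℕ) (ε : ℝ) (hε0 : 0 < ε) (hε1 : ε < 1)
    (s ξ : ℕ → ℝ) (hs : ∀ k : ℕ, 1 ≤ k → k ≤ n → |s k| ≤ 1 - ε)
    (y : ℕ → ℝ) (hy : ∀ k < n, y (k + 1) = s (k + 1) * y k + ξ (k + 1)) :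
    ∀ k : ℕ, 1 ≤ k → k ≤ n →
      y k ^ 4 ≤ 8 * y 0 ^ 4 +
        8 / ε ^ 3 * ∑ j ∈ Finset.Icc 1 k, (1 - ε) ^ (k - j) * ξ j ^ 4 :=
  statement8_general n ε hε0 s ξ hs y hy

end
end
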